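/- arXiv:2404.18813 — 6 statements merged into one kernel-verified Lean document; each statement's English description precedes it below -/
import Mathlib

section
/- Let f : ℝⁿ → ℝⁿ be a vector field and x : ℝ≥0 → ℝⁿ a continuously differentiable trajectory satisfying x'(t) = f(x(t)) for all t ≥ 0. Let B : ℝⁿ → ℝ be continuously differentiable. If B(x(0)) ≤ 0 and for every point y with B(y) = 0 the Lie derivative ∇B(y) · f(y) is strictly negative, then B(x(t)) ≤ 0 for all t ≥ 0. -/
open Set

/-! Along the trajectory, `g t = B (x t)` is differentiable with `g' t` the Lie derivative at `x t`,
so `g' < 0` wherever `g = 0`: by the fencing theorem for right derivatives, `g` can never climb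
above the barrier `0` on any interval `[0, T]`. -/

theorem le_zero_of_lieDeriv_neg_of_eq_zero {E : Type*} [NormedAddCommGroup E] [NormedSpace ℝ E]
    {f : E → E} {x : ℝ → E} {B : E → ℝ} (hB : Differentiable ℝ B)
    (hode : ∀ t : ℝ, 0 ≤ t → HasDerivAt x (f (x t)) t) (h0 : B (x 0) ≤ 0)
    (hLie : ∀ y, B y = 0 → fderiv ℝ B y (f y) < 0) {T : ℝ} (hT : 0 ≤ T) : B (x T) ≤ 0 := by
  have hderiv : ∀ t, 0 ≤ t → HasDerivAt (B ∘ x) (fderiv ℝ B (x t) (f (x t))) t := fun t ht =>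
    (hB (x t)).hasFDerivAt.comp_hasDerivAt t (hode t ht)
  have hcont : ContinuousOn (B ∘ x) (Icc 0 T) := fun t ht =>
    (hderiv t ht.1).continuousAt.continuousWithinAt
  exact image_le_of_deriv_right_lt_deriv_boundary (B := fun _ => 0) hcont
    (fun t ht => (hderiv t ht.1).hasDerivWithinAt) h0 (fun _ => hasDerivAt_const _ _)
    (fun t _ hzero => hLie (x t) hzero) ⟨hT, le_rfl⟩

theorem barrier_invariance_general {n : ℕ} (f : (Fin n → ℝ) → (Fin n → ℝ))
    (x : ℝ → (Fin n → ℝ)) (B : (Fin n → ℝ) → ℝ)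
    (hode : ∀ t : ℝ, 0 ≤ t → HasDerivAt x (f (x t)) t)
    (hB : ContDiff ℝ 1 B)
    (h0 : B (x 0) ≤ 0)
    (hLie : ∀ y, B y = 0 → fderiv ℝ B y (f y) < 0) :
    ∀ t : ℝ, 0 ≤ t → B (x t) ≤ 0 :=
  fun _ ht => le_zero_of_lieDeriv_neg_of_eq_zero (hB.differentiable one_ne_zero) hode h0 hLie ht

/-- Barrier invariance: if `B(x 0) ≤ 0` and the Lie derivative `∇B(y)·f(y)`
(expressed as `fderiv ℝ B y (f y)`) is strictly negative on the zero level set of `B`,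
then `B(x t) ≤ 0` for all `t ≥ 0`. -/
theorem barrier_invariance {n : ℕ} (f : (Fin n → ℝ) → (Fin n → ℝ))
    (x : ℝ → (Fin n → ℝ)) (B : (Fin n → ℝ) → ℝ)
    (hx : ContDiff ℝ 1 x)
    (hode : ∀ t : ℝ, 0 ≤ t → HasDerivAt x (f (x t)) t)
    (hB : ContDiff ℝ 1 B)
    (h0 : B (x 0) ≤ 0)
    (hLie : ∀ y, B y = 0 → fderiv ℝ B y (f y) < 0) :
    ∀ t : ℝ, 0 ≤ t → B (x t) ≤ 0 :=
  barrier_invariance_general f x B hode hB h0 hLie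
end

section
/- Let f : ℝⁿ → ℝⁿ be a vector field, X₀ and X_u subsets of ℝⁿ, and suppose B : ℝⁿ → ℝ is a barrier certificate: B ≤ 0 on X₀, B > 0 on X_u, and ∇B(y) · f(y) < 0 whenever B(y) = 0. Then for every continuously differentiable trajectory x with x(0) ∈ X₀ and x'(t) = f(x(t)) for all t ≥ 0, x(t) ∉ X_u for all t ≥ 0 (safety). -/
/-! Along a trajectory, `g t = B (x t)` starts at a value `≤ 0`, and wherever it touches `0`
its derivative, the Lie derivative of `B` along `f`, is negative. By Mathlib's fencing theorem
(comparison with the barrier `0`), `g` can never become positive, so the trajectory never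
reaches the region `B > 0` containing the unsafe set. -/

theorem nonpos_of_hasDerivAt_neg_of_eq_zero {g g' : ℝ → ℝ}
    (hg : ∀ t, 0 ≤ t → HasDerivAt g (g' t) t) (hg0 : g 0 ≤ 0)
    (hzero : ∀ t, 0 ≤ t → g t = 0 → g' t < 0) {t : ℝ} (ht : 0 ≤ t) : g t ≤ 0 :=
  image_le_of_deriv_right_lt_deriv_boundary (B := fun _ => 0) (B' := fun _ => 0)
    (fun s hs => (hg s hs.1).continuousAt.continuousWithinAt)
    (fun s hs => (hg s hs.1).hasDerivWithinAt) hg0 (fun _ => hasDerivAt_const _ _)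
    (fun s hs => hzero s hs.1) ⟨ht, le_rfl⟩

theorem barrier_nonpos_of_hasDerivAt {E : Type*} [NormedAddCommGroup E] [NormedSpace ℝ E]
    {f : E → E} {B : E → ℝ} (hB : Differentiable ℝ B)
    (hLie : ∀ y, B y = 0 → fderiv ℝ B y (f y) < 0) {x : ℝ → E}
    (hx : ∀ t, 0 ≤ t → HasDerivAt x (f (x t)) t) (hx0 : B (x 0) ≤ 0) {t : ℝ} (ht : 0 ≤ t) :
    B (x t) ≤ 0 :=
  nonpos_of_hasDerivAt_neg_of_eq_zero (g := B ∘ x)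
    (fun s hs => (hB (x s)).hasFDerivAt.comp_hasDerivAt s (hx s hs)) hx0
    (fun s _ hs => hLie (x s) hs) ht

/-- Theorem 1 (safety via barrier certificates): if `B ≤ 0` on `X₀`, `B > 0` on `Xu`,
and the Lie derivative `∇B(y)·f(y)` is strictly negative whenever `B y = 0`, then no
C¹ trajectory of `x' = f x` starting in `X₀` ever enters `Xu`. -/
theorem barrier_safety {n : ℕ} (f : (Fin n → ℝ) → (Fin n → ℝ))
    (X₀ Xu : Set (Fin n → ℝ)) (B : (Fin n → ℝ) → ℝ)
    (hB : ContDiff ℝ 1 B)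
    (hInit : ∀ y ∈ X₀, B y ≤ 0)
    (hUnsafe : ∀ y ∈ Xu, 0 < B y)
    (hLie : ∀ y, B y = 0 → fderiv ℝ B y (f y) < 0) :
    ∀ x : ℝ → (Fin n → ℝ), ContDiff ℝ 1 x → x 0 ∈ X₀ →
      (∀ t : ℝ, 0 ≤ t → HasDerivAt x (f (x t)) t) →
      ∀ t : ℝ, 0 ≤ t → x t ∉ Xu := by
  intro x _ hx0 hx t ht hxt
  have hnonpos : B (x t) ≤ 0 :=
    barrier_nonpos_of_hasDerivAt (hB.differentiable one_ne_zero) hLie hx (hInit _ hx0) ht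
  exact (hUnsafe _ hxt).not_ge hnonpos
end

section
/- Let f : ℝⁿ → ℝⁿ be a vector field, X₀ ⊆ ℝⁿ an initial set, and define the reach set R = {x(t) : t ≥ 0, x a C¹ solution of x' = f(x) with x(0) ∈ X₀}. If B : ℝⁿ → ℝ is continuously differentiable with B ≤ 0 on X₀ and ∇B(y)·f(y) < 0 whenever B(y)=0, then R ⊆ {y | B(y) ≤ 0}. -/
theorem barrier_nonpos_along_solution {E : Type*} [NormedAddCommGroup E] [NormedSpace ℝ E]
    {f : E → E} {B : E → ℝ} {x : ℝ → E} (hB : Differentiable ℝ B)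
    (hx : ∀ t, 0 ≤ t → HasDerivAt x (f (x t)) t) (hx0 : B (x 0) ≤ 0)
    (hLie : ∀ y, B y = 0 → fderiv ℝ B y (f y) < 0) {t : ℝ} (ht : 0 ≤ t) :
    B (x t) ≤ 0 := by
  have hderiv : ∀ s, 0 ≤ s → HasDerivAt (B ∘ x) (fderiv ℝ B (x s) (f (x s))) s :=
    fun s hs => (hB (x s)).hasFDerivAt.comp_hasDerivAt s (hx s hs)
  -- Fencing against the constant barrier `0`: wherever `B ∘ x` touches `0`, its derivative is
  -- the Lie derivative of `B` along `f`, which is negative.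
  exact image_le_of_deriv_right_lt_deriv_boundary (B' := fun _ => 0)
    (fun s hs => (hderiv s hs.1).continuousAt.continuousWithinAt)
    (fun s hs => (hderiv s hs.1).hasDerivWithinAt) hx0 (fun _ => hasDerivAt_const _ _)
    (fun s _ hs => hLie _ hs) ⟨ht, le_rfl⟩

/-- Corollary 3: the sub-zero level set of a barrier certificate over-approximates
the reach set from the initial set `X₀`. -/
theorem barrier_reach_set_overapprox {n : ℕ} (f : (Fin n → ℝ) → (Fin n → ℝ))
    (X₀ : Set (Fin n → ℝ)) (B : (Fin n → ℝ) → ℝ)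
    (R : Set (Fin n → ℝ))
    (hR : R = {p | ∃ x : ℝ → (Fin n → ℝ), ContDiff ℝ 1 x ∧ x 0 ∈ X₀ ∧
      (∀ t : ℝ, 0 ≤ t → HasDerivAt x (f (x t)) t) ∧ ∃ t : ℝ, 0 ≤ t ∧ p = x t})
    (hB : ContDiff ℝ 1 B)
    (hInit : ∀ y ∈ X₀, B y ≤ 0)
    (hLie : ∀ y, B y = 0 → fderiv ℝ B y (f y) < 0) :
    R ⊆ {y | B y ≤ 0} := by
  subst hR
  rintro _ ⟨x, -, hx0, hx, t, ht, rfl⟩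
  exact barrier_nonpos_along_solution (hB.differentiable one_ne_zero) hx (hInit _ hx0) hLie ht
end

section
/- Let f : ℝⁿ → ℝⁿ be a vector field, X_b ⊆ ℝⁿ a working region, X₀ ⊆ X_b an initial set, and B : ℝⁿ → ℝ continuously differentiable with B ≤ 0 on X₀ and ∇B(y)·f(y) < 0 for all y ∈ X_b with B(y) = 0. Let x be a C¹ trajectory of x' = f(x) with x(0) ∈ X₀, and let T ≥ 0 be such that x(s) ∈ X_b for all s ∈ [0, T]. Then x(t) ∈ {y ∈ X_b | B(y) ≤ 0} for all t ∈ [0, T]. -/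
/-! `t ↦ B (x t)` starts at a nonpositive value, and whenever it reaches `0` while the
trajectory is still in `Xb` its derivative there is negative, so it cannot cross `0`.
This is the comparison principle `image_le_of_deriv_right_lt_deriv_boundary'` applied
against the zero function. -/

open Set

theorem comp_le_zero_of_fderiv_apply_neg_of_eq_zero {E : Type*} [NormedAddCommGroup E]
    [NormedSpace ℝ E] {B : E → ℝ} {x v : ℝ → E} {a b : ℝ}
    (hB : ∀ t ∈ Icc a b, DifferentiableAt ℝ B (x t))
    (hx : ∀ t ∈ Icc a b, HasDerivAt x (v t) t) (ha : B (x a) ≤ 0)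
    (hboundary : ∀ t ∈ Ico a b, B (x t) = 0 → fderiv ℝ B (x t) (v t) < 0) :
    ∀ t ∈ Icc a b, B (x t) ≤ 0 := by
  have hderiv : ∀ t ∈ Icc a b, HasDerivAt (fun s => B (x s)) (fderiv ℝ B (x t) (v t)) t :=
    fun t ht => (hB t ht).hasFDerivAt.comp_hasDerivAt t (hx t ht)
  intro t ht
  exact image_le_of_deriv_right_lt_deriv_boundary'
    (fun s hs => (hderiv s hs).continuousAt.continuousWithinAt)
    (fun s hs => (hderiv s (Ico_subset_Icc_self hs)).hasDerivWithinAt)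
    ha continuousOn_const (fun _ _ => hasDerivWithinAt_const _ _ 0) hboundary ht

theorem barrier_working_region_general {n : ℕ} (f : (Fin n → ℝ) → (Fin n → ℝ))
    (Xb X₀ : Set (Fin n → ℝ)) (B : (Fin n → ℝ) → ℝ)
    (hB : ContDiff ℝ 1 B)
    (hInit : ∀ y ∈ X₀, B y ≤ 0)
    (hLie : ∀ y ∈ Xb, B y = 0 → fderiv ℝ B y (f y) < 0)
    (x : ℝ → (Fin n → ℝ))
    (hode : ∀ t : ℝ, 0 ≤ t → HasDerivAt x (f (x t)) t)
    (hx0 : x 0 ∈ X₀)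
    (T : ℝ)
    (hstay : ∀ s ∈ Set.Icc (0 : ℝ) T, x s ∈ Xb) :
    ∀ t ∈ Set.Icc (0 : ℝ) T, x t ∈ {y ∈ Xb | B y ≤ 0} := by
  have hle := comp_le_zero_of_fderiv_apply_neg_of_eq_zero (v := fun t => f (x t))
    (fun t _ => hB.differentiable one_ne_zero (x t)) (fun t ht => hode t ht.1)
    (hInit _ hx0) (fun t ht => hLie _ (hstay t (Ico_subset_Icc_self ht)))
  exact fun t ht => ⟨hstay t ht, hle t ht⟩

/-- Theorem 4 (working region): if the Lie derivative condition holds only inside the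
working region `Xb`, then a trajectory starting in `X₀ ⊆ Xb` remains in
`{y ∈ Xb | B y ≤ 0}` as long as it stays in `Xb`. -/
theorem barrier_working_region {n : ℕ} (f : (Fin n → ℝ) → (Fin n → ℝ))
    (Xb X₀ : Set (Fin n → ℝ)) (B : (Fin n → ℝ) → ℝ)
    (hsub : X₀ ⊆ Xb)
    (hB : ContDiff ℝ 1 B)
    (hInit : ∀ y ∈ X₀, B y ≤ 0)
    (hLie : ∀ y ∈ Xb, B y = 0 → fderiv ℝ B y (f y) < 0)
    (x : ℝ → (Fin n → ℝ)) (hx : ContDiff ℝ 1 x)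
    (hode : ∀ t : ℝ, 0 ≤ t → HasDerivAt x (f (x t)) t)
    (hx0 : x 0 ∈ X₀)
    (T : ℝ) (hT : 0 ≤ T)
    (hstay : ∀ s ∈ Set.Icc (0 : ℝ) T, x s ∈ Xb) :
    ∀ t ∈ Set.Icc (0 : ℝ) T, x t ∈ {y ∈ Xb | B y ≤ 0} :=
  barrier_working_region_general f Xb X₀ B hB hInit hLie x hode hx0 T hstay
end

section
/- Let g : ℝ → ℝ be continuously differentiable with g(0) ≤ 0, and suppose that for every t ≥ 0 with g(t) = 0 we have g'(t) < 0. Then g(t) ≤ 0 for all t ≥ 0. -/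
/-- Scalar core of the barrier argument: if `g 0 ≤ 0` and `g' t < 0` whenever
`g t = 0` for `t ≥ 0`, then `g t ≤ 0` for all `t ≥ 0`. -/
theorem scalar_barrier_lemma (g : ℝ → ℝ)
    (hg : ContDiff ℝ 1 g)
    (h0 : g 0 ≤ 0)
    (hLie : ∀ t : ℝ, 0 ≤ t → g t = 0 → deriv g t < 0) :
    ∀ t : ℝ, 0 ≤ t → g t ≤ 0 := by
  intro t ht
  have hdiff : Differentiable ℝ g := hg.differentiable one_ne_zero
  exact image_le_of_deriv_right_lt_deriv_boundary (b := t) (B := 0) (B' := 0)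
    hg.continuous.continuousOn (fun x _ ↦ (hdiff x).hasDerivAt.hasDerivWithinAt) h0
    (fun _ ↦ hasDerivAt_const _ _)
    (fun x hx hx0 ↦ hLie x hx.1 hx0) ⟨ht, le_rfl⟩
end

section
/- Let f : ℝⁿ → ℝⁿ, let X_b be a compact set, X₀ ⊆ X_b, and let B : ℝⁿ → ℝ satisfy the working-region barrier conditions of Theorem 4 (B ≤ 0 on X₀, B > 0 on X_u ∩ X_b, ∇B·f < 0 on {y ∈ X_b | B(y) = 0}). Then R_b := {y ∈ X_b | B(y) ≤ 0} is disjoint from X_u ∩ X_b, and any trajectory from X₀ that remains in X_b on [0, T] avoids X_u on [0, T]. -/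
/-! Along a trajectory that stays in the working region, `t ↦ B (x t)` starts nonpositive and
has negative derivative whenever it vanishes, so by the fencing principle it never becomes
positive; since `B > 0` on the unsafe part of the working region, that part is never reached. -/

open Set

theorem barrier_nonpos_along_trajectory {E : Type*} [NormedAddCommGroup E] [NormedSpace ℝ E]
    {f : E → E} {B : E → ℝ} {X : Set E} {x : ℝ → E} {a b : ℝ}
    (hB : Differentiable ℝ B) (hLie : ∀ y ∈ X, B y = 0 → fderiv ℝ B y (f y) < 0)
    (hx : ContinuousOn x (Icc a b))
    (hx' : ∀ t ∈ Ico a b, HasDerivWithinAt x (f (x t)) (Ici t) t)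
    (hX : ∀ t ∈ Ico a b, x t ∈ X) (ha : B (x a) ≤ 0) :
    ∀ t ∈ Icc a b, B (x t) ≤ 0 :=
  image_le_of_deriv_right_lt_deriv_boundary' (f := B ∘ x) (B := fun _ => 0) (B' := fun _ => 0)
    (hB.continuous.comp_continuousOn hx)
    (fun t ht => (hB (x t)).hasFDerivAt.comp_hasDerivWithinAt t (hx' t ht)) ha
    continuousOn_const (fun _ _ => hasDerivWithinAt_const _ _ _)
    (fun t ht => hLie (x t) (hX t ht))

theorem disjoint_sublevel_of_pos {E : Type*} {B : E → ℝ} {S U : Set E}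
    (hU : ∀ y ∈ U, 0 < B y) : Disjoint {y ∈ S | B y ≤ 0} U :=
  disjoint_left.2 fun y hy hyU => (hU y hyU).not_ge hy.2

theorem barrier_working_region_safety_general {n : ℕ} (f : (Fin n → ℝ) → (Fin n → ℝ))
    (Xb X₀ Xu : Set (Fin n → ℝ)) (B : (Fin n → ℝ) → ℝ)
    (hB : ContDiff ℝ 1 B)
    (hInit : ∀ y ∈ X₀, B y ≤ 0)
    (hUnsafe : ∀ y ∈ Xu ∩ Xb, 0 < B y)
    (hLie : ∀ y ∈ Xb, B y = 0 → fderiv ℝ B y (f y) < 0) :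
    Disjoint {y ∈ Xb | B y ≤ 0} (Xu ∩ Xb) ∧
    (∀ x : ℝ → (Fin n → ℝ), ContDiff ℝ 1 x →
      (∀ t : ℝ, 0 ≤ t → HasDerivAt x (f (x t)) t) →
      x 0 ∈ X₀ →
      ∀ T : ℝ, 0 ≤ T → (∀ s ∈ Set.Icc (0 : ℝ) T, x s ∈ Xb) →
      ∀ t ∈ Set.Icc (0 : ℝ) T, x t ∉ Xu) := by
  refine ⟨disjoint_sublevel_of_pos hUnsafe, ?_⟩
  intro x hx hx' h0 T _ hconf t ht hxu
  have hBx : B (x t) ≤ 0 :=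
    barrier_nonpos_along_trajectory (hB.differentiable one_ne_zero) hLie
      hx.continuous.continuousOn (fun s hs => (hx' s hs.1).hasDerivWithinAt)
      (fun s hs => hconf s (Ico_subset_Icc_self hs)) (hInit _ h0) t ht
  exact (hUnsafe (x t) ⟨hxu, hconf t ht⟩).not_ge hBx

/-- Working-region safety: `R_b = {y ∈ Xb | B y ≤ 0}` is disjoint from `Xu ∩ Xb`, and
any trajectory from `X₀` confined to `Xb` on `[0, T]` avoids `Xu` on `[0, T]`. -/
theorem barrier_working_region_safety {n : ℕ} (f : (Fin n → ℝ) → (Fin n → ℝ))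
    (Xb X₀ Xu : Set (Fin n → ℝ)) (B : (Fin n → ℝ) → ℝ)
    (hcomp : IsCompact Xb) (hsub : X₀ ⊆ Xb)
    (hB : ContDiff ℝ 1 B)
    (hInit : ∀ y ∈ X₀, B y ≤ 0)
    (hUnsafe : ∀ y ∈ Xu ∩ Xb, 0 < B y)
    (hLie : ∀ y ∈ Xb, B y = 0 → fderiv ℝ B y (f y) < 0) :
    Disjoint {y ∈ Xb | B y ≤ 0} (Xu ∩ Xb) ∧
    (∀ x : ℝ → (Fin n → ℝ), ContDiff ℝ 1 x →
      (∀ t : ℝ, 0 ≤ t → HasDerivAt x (f (x t)) t) →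
      x 0 ∈ X₀ →
      ∀ T : ℝ, 0 ≤ T → (∀ s ∈ Set.Icc (0 : ℝ) T, x s ∈ Xb) →
      ∀ t ∈ Set.Icc (0 : ℝ) T, x t ∉ Xu) :=
  barrier_working_region_safety_general f Xb X₀ Xu B hB hInit hUnsafe hLie
end
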